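/- Let X be a finite type, μ a probability measure on a finite family D of probability distributions on X, and D₀ a probability distribution on X. Then (1/4)·κ̄₁(μ, D₀) ≥ (1/2)·κ̄_v(μ, D₀)², where κ̄_v and κ̄₁ are as defined: κ̄_v(μ,D₀) = sup_{φ:X→[0,1]} E_{D∼μ}[|√(E_D[φ]) - √(E_{D₀}[φ])|] and κ̄₁(μ,D₀) = sup_{φ:X→[-1,1]} E_{D∼μ}[|E_D[φ] - E_{D₀}[φ]|]. -/
import Mathlib


open Finset

def IsDist {X : Type*} [Fintype X] (D : X → ℝ) : Prop :=
  (∀ x, 0 ≤ D x) ∧ ∑ x, D x = 1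

def expec {X : Type*} [Fintype X] (D φ : X → ℝ) : ℝ := ∑ x, D x * φ x

/-- `κ̄_v(μ, D₀)`: the supremum over `φ : X → [0,1]` of the average (over
`D ∼ μ`) discrimination `|√(E_D[φ]) - √(E_{D₀}[φ])|`. -/
noncomputable def kbarv {X J : Type*} [Fintype X] [Fintype J]
    (μ : J → ℝ) (Ds : J → X → ℝ) (D0 : X → ℝ) : ℝ :=
  ⨆ φ : {φ : X → ℝ // ∀ x, φ x ∈ Set.Icc (0:ℝ) 1},
    ∑ j, μ j * |Real.sqrt (expec (Ds j) φ.1) - Real.sqrt (expec D0 φ.1)|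

/-- `κ̄₁(μ, D₀)`: the supremum over `φ : X → [-1,1]` of the average (over
`D ∼ μ`) discrimination `|E_D[φ] - E_{D₀}[φ]|`. -/
noncomputable def kbar1 {X J : Type*} [Fintype X] [Fintype J]
    (μ : J → ℝ) (Ds : J → X → ℝ) (D0 : X → ℝ) : ℝ :=
  ⨆ φ : {φ : X → ℝ // ∀ x, φ x ∈ Set.Icc (-1:ℝ) 1},
    ∑ j, μ j * |expec (Ds j) φ.1 - expec D0 φ.1|

lemma expec_nonneg {X : Type*} [Fintype X] {D φ : X → ℝ} (hD : IsDist D)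
    (hφ : ∀ x, 0 ≤ φ x) : 0 ≤ expec D φ :=
  Finset.sum_nonneg fun x _ => mul_nonneg (hD.1 x) (hφ x)

lemma abs_expec_le_one {X : Type*} [Fintype X] {D φ : X → ℝ} (hD : IsDist D)
    (hφ : ∀ x, |φ x| ≤ 1) : |expec D φ| ≤ 1 := by
  calc |expec D φ| ≤ ∑ x, |D x * φ x| := Finset.abs_sum_le_sum_abs _ _
    _ ≤ ∑ x, D x := Finset.sum_le_sum fun x _ => by
        rw [abs_mul, abs_of_nonneg (hD.1 x)]
        calc D x * |φ x| ≤ D x * 1 := mul_le_mul_of_nonneg_left (hφ x) (hD.1 x)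
          _ = D x := mul_one _
    _ = 1 := hD.2

lemma sq_sqrt_sub_le {a b : ℝ} (ha : 0 ≤ a) (hb : 0 ≤ b) :
    (Real.sqrt a - Real.sqrt b) ^ 2 ≤ |a - b| := by
  rcases le_total a b with h | h
  · rw [abs_of_nonpos (by linarith)]
    nlinarith [Real.sq_sqrt ha, Real.sq_sqrt hb, Real.sqrt_nonneg a, Real.sqrt_nonneg b,
      Real.sqrt_le_sqrt h]
  · rw [abs_of_nonneg (by linarith)]
    nlinarith [Real.sq_sqrt ha, Real.sq_sqrt hb, Real.sqrt_nonneg a, Real.sqrt_nonneg b,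
      Real.sqrt_le_sqrt h]

theorem stmt11 {X J : Type*} [Fintype X] [Fintype J] [Nonempty J]
    (D0 : X → ℝ) (hD0 : IsDist D0)
    (Ds : J → X → ℝ) (hDs : ∀ j, IsDist (Ds j))
    (μ : J → ℝ) (hμ : IsDist μ) :
    (1 / 2) * kbarv μ Ds D0 ^ 2 ≤ (1 / 4) * kbar1 μ Ds D0 := by
  -- boundedness of the kbar1 family
  have hbdd1 : BddAbove (Set.range fun φ : {φ : X → ℝ // ∀ x, φ x ∈ Set.Icc (-1:ℝ) 1} =>
      ∑ j, μ j * |expec (Ds j) φ.1 - expec D0 φ.1|) := by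
    refine ⟨2, ?_⟩
    rintro y ⟨φ, rfl⟩
    have habs : ∀ x, |φ.1 x| ≤ 1 := fun x => abs_le.2 ⟨(φ.2 x).1, (φ.2 x).2⟩
    calc ∑ j, μ j * |expec (Ds j) φ.1 - expec D0 φ.1|
        ≤ ∑ j, μ j * 2 := Finset.sum_le_sum fun j _ => by
          refine mul_le_mul_of_nonneg_left ?_ (hμ.1 j)
          calc |expec (Ds j) φ.1 - expec D0 φ.1|
              ≤ |expec (Ds j) φ.1| + |expec D0 φ.1| := abs_sub _ _
            _ ≤ 1 + 1 := add_le_add (abs_expec_le_one (hDs j) habs)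
                (abs_expec_le_one hD0 habs)
            _ = 2 := by norm_num
      _ = 2 := by rw [← Finset.sum_mul, hμ.2, one_mul]
  have hk1 : 0 ≤ kbar1 μ Ds D0 := by
    have h0 : (∑ j, μ j * |expec (Ds j) (fun _ => (0:ℝ)) - expec D0 (fun _ => (0:ℝ))|) ≤
        kbar1 μ Ds D0 :=
      le_ciSup hbdd1 ⟨fun _ => 0, fun x => ⟨by norm_num, by norm_num⟩⟩
    simpa [expec] using h0
  -- key bound: for each φ in [0,1], (∑ μ_j |√a_j - √b|)² ≤ (1/2) kbar1
  have key : ∀ φ : {φ : X → ℝ // ∀ x, φ x ∈ Set.Icc (0:ℝ) 1},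
      (∑ j, μ j * |Real.sqrt (expec (Ds j) φ.1) - Real.sqrt (expec D0 φ.1)|) ^ 2
        ≤ (1 / 2) * kbar1 μ Ds D0 := by
    intro φ
    set b := expec D0 φ.1 with hb
    have hφ0 : ∀ x, 0 ≤ φ.1 x := fun x => (φ.2 x).1
    have hbnn : 0 ≤ b := expec_nonneg hD0 hφ0
    -- Cauchy-Schwarz
    have hCS : (∑ j, μ j * |Real.sqrt (expec (Ds j) φ.1) - Real.sqrt b|) ^ 2
        ≤ ∑ j, μ j * (Real.sqrt (expec (Ds j) φ.1) - Real.sqrt b) ^ 2 := by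
      have := sum_mul_sq_le_sq_mul_sq Finset.univ (fun j => Real.sqrt (μ j))
        (fun j => Real.sqrt (μ j) * |Real.sqrt (expec (Ds j) φ.1) - Real.sqrt b|)
      have e1 : ∀ j : J, Real.sqrt (μ j) *
          (Real.sqrt (μ j) * |Real.sqrt (expec (Ds j) φ.1) - Real.sqrt b|)
          = μ j * |Real.sqrt (expec (Ds j) φ.1) - Real.sqrt b| := by
        intro j
        rw [← mul_assoc, Real.mul_self_sqrt (hμ.1 j)]
      have e2 : ∀ j : J, (Real.sqrt (μ j)) ^ 2 = μ j := fun j => Real.sq_sqrt (hμ.1 j)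
      have e3 : ∀ j : J, (Real.sqrt (μ j) * |Real.sqrt (expec (Ds j) φ.1) - Real.sqrt b|) ^ 2
          = μ j * (Real.sqrt (expec (Ds j) φ.1) - Real.sqrt b) ^ 2 := by
        intro j
        rw [mul_pow, Real.sq_sqrt (hμ.1 j), sq_abs]
      simp only [e1, e2, e3] at this
      rwa [hμ.2, one_mul] at this
    -- (√a - √b)² ≤ |a - b|
    have hJensen : ∑ j, μ j * (Real.sqrt (expec (Ds j) φ.1) - Real.sqrt b) ^ 2
        ≤ ∑ j, μ j * |expec (Ds j) φ.1 - b| :=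
      Finset.sum_le_sum fun j _ => mul_le_mul_of_nonneg_left
        (sq_sqrt_sub_le (expec_nonneg (hDs j) hφ0) hbnn) (hμ.1 j)
    -- relate to kbar1 via ψ = 2φ - 1
    set ψ : X → ℝ := fun x => 2 * φ.1 x - 1 with hψ
    have hψmem : ∀ x, ψ x ∈ Set.Icc (-1:ℝ) 1 := by
      intro x
      have := φ.2 x
      constructor <;> simp only [hψ] <;> [linarith [this.1]; linarith [this.2]]
    have hexpψ : ∀ (D : X → ℝ), IsDist D → expec D ψ = 2 * expec D φ.1 - 1 := by
      intro D hD
      simp only [expec, hψ]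
      have : ∀ x : X, D x * (2 * φ.1 x - 1) = 2 * (D x * φ.1 x) - D x := fun x => by ring
      rw [Finset.sum_congr rfl fun x _ => this x, Finset.sum_sub_distrib, ← Finset.mul_sum, hD.2]
    have hrel : ∑ j, μ j * |expec (Ds j) φ.1 - b|
        = (1 / 2) * ∑ j, μ j * |expec (Ds j) ψ - expec D0 ψ| := by
      rw [Finset.mul_sum]
      refine Finset.sum_congr rfl fun j _ => ?_
      rw [hexpψ _ (hDs j), hexpψ _ hD0]
      have : (2 * expec (Ds j) φ.1 - 1) - (2 * expec D0 φ.1 - 1)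
          = 2 * (expec (Ds j) φ.1 - b) := by rw [hb]; ring
      rw [this, abs_mul]
      simp [abs_of_nonneg]
      ring
    have hle1 : ∑ j, μ j * |expec (Ds j) ψ - expec D0 ψ| ≤ kbar1 μ Ds D0 :=
      le_ciSup hbdd1 ⟨ψ, hψmem⟩
    calc (∑ j, μ j * |Real.sqrt (expec (Ds j) φ.1) - Real.sqrt b|) ^ 2
        ≤ ∑ j, μ j * (Real.sqrt (expec (Ds j) φ.1) - Real.sqrt b) ^ 2 := hCS
      _ ≤ ∑ j, μ j * |expec (Ds j) φ.1 - b| := hJensen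
      _ = (1 / 2) * ∑ j, μ j * |expec (Ds j) ψ - expec D0 ψ| := hrel
      _ ≤ (1 / 2) * kbar1 μ Ds D0 := by linarith
  -- conclude: kbarv ≤ √((1/2) kbar1)
  have hc : 0 ≤ (1 / 2) * kbar1 μ Ds D0 := by linarith
  have hne : Nonempty {φ : X → ℝ // ∀ x, φ x ∈ Set.Icc (0:ℝ) 1} :=
    ⟨⟨fun _ => 0, fun x => ⟨le_rfl, zero_le_one⟩⟩⟩
  have hkv : kbarv μ Ds D0 ≤ Real.sqrt ((1 / 2) * kbar1 μ Ds D0) := by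
    refine ciSup_le fun φ => ?_
    have h1 : 0 ≤ ∑ j, μ j * |Real.sqrt (expec (Ds j) φ.1) - Real.sqrt (expec D0 φ.1)| :=
      Finset.sum_nonneg fun j _ => mul_nonneg (hμ.1 j) (abs_nonneg _)
    have := key φ
    nlinarith [Real.sq_sqrt hc, Real.sqrt_nonneg ((1 / 2) * kbar1 μ Ds D0)]
  have hkvnn : 0 ≤ kbarv μ Ds D0 := by
    have hbddv : BddAbove (Set.range fun φ : {φ : X → ℝ // ∀ x, φ x ∈ Set.Icc (0:ℝ) 1} =>
        ∑ j, μ j * |Real.sqrt (expec (Ds j) φ.1) - Real.sqrt (expec D0 φ.1)|) :=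
      ⟨Real.sqrt ((1 / 2) * kbar1 μ Ds D0), by
        rintro y ⟨φ, rfl⟩
        have h1 : 0 ≤ ∑ j, μ j * |Real.sqrt (expec (Ds j) φ.1) - Real.sqrt (expec D0 φ.1)| :=
          Finset.sum_nonneg fun j _ => mul_nonneg (hμ.1 j) (abs_nonneg _)
        have := key φ
        nlinarith [Real.sq_sqrt hc, Real.sqrt_nonneg ((1 / 2) * kbar1 μ Ds D0)]⟩
    have h0 : (∑ j, μ j * |Real.sqrt (expec (Ds j) (fun _ => (0:ℝ)))
        - Real.sqrt (expec D0 (fun _ => (0:ℝ)))|) ≤ kbarv μ Ds D0 :=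
      le_ciSup hbddv ⟨fun _ => 0, fun x => ⟨le_rfl, zero_le_one⟩⟩
    simpa [expec] using h0
  have hsq : kbarv μ Ds D0 ^ 2 ≤ (1 / 2) * kbar1 μ Ds D0 := by
    nlinarith [Real.sq_sqrt hc, Real.sqrt_nonneg ((1 / 2) * kbar1 μ Ds D0)]
  linarith
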